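/- Let ℓ(z) = log(1 + exp(−z)) be the logistic loss, let g : ℝ^d → ℝ be differentiable and 1-strongly convex, let λ > 0, Δ ≥ 0, and let D = ((x_1,y_1),…,(x_n,y_n)) be a dataset with x_i ∈ ℝ^d, y_i ∈ {−1,1}. Then for every b ∈ ℝ^d the perturbed objective F(·; D, b, Δ) has a unique global minimizer w̄ ∈ ℝ^d, and w̄ is the minimizer for noise vector b if and only if b = −nλ·∇g(w̄) − nΔ·w̄ − Σ_{i=1}^n y_i·ℓ'(y_i⟨w̄, x_i⟩)·x_i. In particular, the map sending b to the minimizer of F(·; D, b, Δ) is a bijection of ℝ^d. -/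

import Mathlib

open Finset

/-- The logistic loss `ℓ(z) = log(1 + exp(−z))`. -/
noncomputable def logisticLoss (z : ℝ) : ℝ := Real.log (1 + Real.exp (-z))

/-- The perturbed objective
`F(w; D, b, Δ) = (1/n)·Σᵢ ℓ(yᵢ⟨w,xᵢ⟩) + (1/n)⟨b,w⟩ + (Δ/2)‖w‖² + λ·g(w)`
with logistic loss `ℓ`. -/
noncomputable def perturbedObj {d n : ℕ}
    (x : Fin n → EuclideanSpace ℝ (Fin d)) (y : Fin n → ℝ)
    (g : EuclideanSpace ℝ (Fin d) → ℝ) (lam Δ : ℝ)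
    (b : EuclideanSpace ℝ (Fin d)) (w : EuclideanSpace ℝ (Fin d)) : ℝ :=
  (1 / n) * ∑ i, logisticLoss (y i * (inner ℝ w (x i) : ℝ)) + (1 / n) * (inner ℝ b w : ℝ)
    + (Δ / 2) * ‖w‖ ^ 2 + lam * g w

/-!
For every noise vector `b`, the objective `F(·; b)` is `λ`-strongly convex: the logistic loss is
convex, the linear and quadratic terms are convex, and `λ g` is `λ`-strongly convex. A differentiable
strongly convex function is coercive, so it has exactly one minimizer, namely its unique critical
point. Since `∇F(w; b) = (b - β(w)) / n`, where `β(w) = -nλ∇g(w) - nΔw - Σᵢ yᵢ ℓ'(yᵢ⟨w, xᵢ⟩) xᵢ` is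
`minimizingNoise`, `w` minimizes `F(·; b)` exactly when `b = β(w)`; so `β` inverts
`b ↦ argmin F(·; b)`.
-/

open Filter Set

section ConvexMinimization

variable {E : Type*} [NormedAddCommGroup E]

lemma ConvexOn.add_apply_sub_le [NormedSpace ℝ E] {f : E → ℝ} (hf : ConvexOn ℝ univ f)
    {w : E} {L : E →L[ℝ] ℝ} (hL : HasFDerivAt f L w) (v : E) : f w + L (v - w) ≤ f v := by
  have hline : HasDerivAt (fun t : ℝ => f (AffineMap.lineMap w v t)) (L (v - w)) 0 := by
    have h := ((hasDerivAt_id (0 : ℝ)).smul_const (v - w)).add_const w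
    simp only [id, one_smul] at h
    rw [← AffineMap.lineMap_apply_zero (k := ℝ) w v] at hL
    simpa [AffineMap.lineMap_apply_module', Function.comp_def] using hL.comp_hasDerivAt 0 h
  have hslope := (hf.comp_affineMap (AffineMap.lineMap w v)).le_slope_of_hasDerivAt
    (mem_univ 0) (mem_univ 1) one_pos hline
  simp only [slope_def_field, Function.comp_apply, AffineMap.lineMap_apply_one,
    AffineMap.lineMap_apply_zero, sub_zero, div_one] at hslope
  linarith

variable [InnerProductSpace ℝ E] {f : E → ℝ} {m : ℝ}

lemma StrongConvexOn.add_apply_sub_add_sq_le (hf : StrongConvexOn univ m f) {w : E}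
    {L : E →L[ℝ] ℝ} (hL : HasFDerivAt f L w) (v : E) :
    f w + L (v - w) + m / 2 * ‖v - w‖ ^ 2 ≤ f v := by
  have hq : HasFDerivAt (fun u : E => m / 2 * ‖u‖ ^ 2) ((m / 2) • (2 • innerSL ℝ w)) w :=
    (hasStrictFDerivAt_norm_sq w).hasFDerivAt.const_mul _
  have h := (strongConvexOn_iff_convex.mp hf).add_apply_sub_le (hL.sub hq) v
  have hsq : ‖v‖ ^ 2 = ‖w‖ ^ 2 + 2 * inner ℝ w (v - w) + ‖v - w‖ ^ 2 := by
    rw [← norm_add_sq_real, add_sub_cancel]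
  simp only [sub_apply, smul_apply, innerSL_apply_apply,
    smul_eq_mul, nsmul_eq_mul] at h
  rw [hsq] at h
  linarith

lemma ConvexOn.forall_le_iff_of_hasGradientAt [CompleteSpace E] (hf : ConvexOn ℝ univ f)
    {w f' : E} (hf' : HasGradientAt f f' w) : (∀ v, f w ≤ f v) ↔ f' = 0 := by
  rw [hasGradientAt_iff_hasFDerivAt] at hf'
  rw [← (InnerProductSpace.toDual ℝ E).map_eq_zero_iff]
  refine ⟨fun hmin => IsLocalMin.hasFDerivAt_eq_zero (Eventually.of_forall hmin) hf', ?_⟩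
  intro h v
  rw [h] at hf'
  simpa using hf.add_apply_sub_le hf' v

lemma StrongConvexOn.tendsto_cocompact [ProperSpace E] (hf : StrongConvexOn univ m f) (hm : 0 < m)
    (hd : DifferentiableAt ℝ f 0) : Tendsto f (cocompact E) atTop := by
  set L := fderiv ℝ f 0
  have hbound : ∀ v, ‖v‖ * (m / 2 * ‖v‖ - ‖L‖) + f 0 ≤ f v := fun v => by
    have h := hf.add_apply_sub_add_sq_le hd.hasFDerivAt v
    have := neg_abs_le (L v)
    have := L.le_opNorm v
    simp only [sub_zero, Real.norm_eq_abs] at h this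
    nlinarith
  refine tendsto_atTop_mono hbound (tendsto_atTop_add_const_right _ _ ?_)
  refine tendsto_norm_cocompact_atTop.atTop_mul_atTop₀ ?_
  exact tendsto_atTop_add_const_right _ _
    (tendsto_norm_cocompact_atTop.const_mul_atTop (by positivity))

lemma StrongConvexOn.existsUnique_forall_le [ProperSpace E] (hf : StrongConvexOn univ m f)
    (hm : 0 < m) (hd : Differentiable ℝ f) : ∃! w, ∀ v, f w ≤ f v := by
  obtain ⟨w, hw⟩ := hd.continuous.exists_forall_le (hf.tendsto_cocompact hm (hd 0))
  refine ⟨w, hw, fun u hu => ?_⟩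
  exact (hf.strictConvexOn hm).eq_of_isMinOn (fun v _ => hu v) (fun v _ => hw v)
    (mem_univ _) (mem_univ _)

end ConvexMinimization

lemma hasDerivAt_logisticLoss (z : ℝ) :
    HasDerivAt logisticLoss (-(1 + Real.exp z)⁻¹) z := by
  have h : HasDerivAt logisticLoss _ z :=
    (((hasDerivAt_neg z).exp).const_add 1).log (by positivity)
  convert h using 1
  rw [Real.exp_neg]
  field_simp
  ring

lemma convexOn_logisticLoss : ConvexOn ℝ univ logisticLoss := by
  refine Monotone.convexOn_univ_of_deriv
    (fun z => (hasDerivAt_logisticLoss z).differentiableAt) fun a c hac => ?_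
  simp only [(hasDerivAt_logisticLoss _).deriv, neg_le_neg_iff]
  gcongr

section PerturbedObjective

variable {d n : ℕ} (x : Fin n → EuclideanSpace ℝ (Fin d)) (y : Fin n → ℝ)
  (g : EuclideanSpace ℝ (Fin d) → ℝ) (lam Δ : ℝ)

noncomputable def minimizingNoise (w : EuclideanSpace ℝ (Fin d)) : EuclideanSpace ℝ (Fin d) :=
  -((n * lam) • gradient g w) - (n * Δ) • w
    - ∑ i, (y i * deriv logisticLoss (y i * (inner ℝ w (x i) : ℝ))) • x i

lemma perturbedObj_hasGradientAt (hn : (n : ℝ) ≠ 0) (b w : EuclideanSpace ℝ (Fin d))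
    (hg : DifferentiableAt ℝ g w) :
    HasGradientAt (perturbedObj x y g lam Δ b)
      ((n : ℝ)⁻¹ • (b - minimizingNoise x y g lam Δ w)) w := by
  have hinner (u : EuclideanSpace ℝ (Fin d)) :
      HasFDerivAt (fun v => (inner ℝ v u : ℝ)) (innerSL ℝ u) w := by
    convert (innerSL ℝ u).hasFDerivAt using 1
    ext v
    exact real_inner_comm u v
  have hloss i := ((hasDerivAt_logisticLoss _).differentiableAt.hasDerivAt).comp_hasFDerivAt w
    ((hinner (x i)).const_mul (y i))
  have hF := ((((HasFDerivAt.fun_sum (u := univ) fun i _ => hloss i).const_mul (1 / n : ℝ)).add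
    ((innerSL ℝ b).hasFDerivAt.const_mul (1 / n : ℝ))).add
    ((hasStrictFDerivAt_norm_sq w).hasFDerivAt.const_mul (Δ / 2))).add
    ((hasGradientAt_iff_hasFDerivAt.mp hg.hasGradientAt).const_mul lam)
  refine hasGradientAt_iff_hasFDerivAt.mpr (hF.congr_fderiv ?_)
  ext v
  simp only [one_div, toDual_gradient, add_apply, smul_apply, _root_.sum_apply, coe_innerSL_apply,
    smul_eq_mul, nsmul_eq_mul, Nat.cast_ofNat, minimizingNoise, map_smul, map_sub, map_neg, map_sum,
    sub_apply, InnerProductSpace.toDual_apply_apply, neg_apply]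
  field_simp
  ring_nf

lemma perturbedObj_strongConvexOn (hlam : 0 ≤ lam) (hΔ : 0 ≤ Δ)
    (hg : StrongConvexOn univ 1 g) (b : EuclideanSpace ℝ (Fin d)) :
    StrongConvexOn univ lam (perturbedObj x y g lam Δ b) := by
  have hloss : ConvexOn ℝ univ fun w : EuclideanSpace ℝ (Fin d) =>
      ∑ i, logisticLoss (y i * (inner ℝ w (x i) : ℝ)) := by
    rw [← Finset.sum_fn]
    refine Finset.sum_induction _ (ConvexOn ℝ univ) (fun _ _ => ConvexOn.add)
      (convexOn_const 0 convex_univ) fun i _ => ?_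
    simpa [Function.comp_def, real_inner_comm] using
      convexOn_logisticLoss.comp_linearMap (y i • innerSL ℝ (x i)).toLinearMap
  have hlin : ConvexOn ℝ univ fun w : EuclideanSpace ℝ (Fin d) => (1 / n : ℝ) * inner ℝ b w :=
    ((1 / n : ℝ) • innerSL ℝ b).toLinearMap.convexOn convex_univ
  have hsq : ConvexOn ℝ univ fun w : EuclideanSpace ℝ (Fin d) => Δ / 2 * ‖w‖ ^ 2 :=
    (convexOn_univ_norm.pow (fun w _ => norm_nonneg w) 2).smul (by positivity : 0 ≤ Δ / 2)
  rw [strongConvexOn_iff_convex]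
  refine ((((hloss.smul (by positivity : (0 : ℝ) ≤ 1 / n)).add hlin).add hsq).add
    ((strongConvexOn_iff_convex.mp hg).smul hlam)).congr fun w _ => ?_
  simp only [perturbedObj, Pi.add_apply, smul_eq_mul]
  ring

end PerturbedObjective

theorem perturbedObj_unique_min_and_bijective_general {d n : ℕ} (hn : 1 ≤ n)
    (g : EuclideanSpace ℝ (Fin d) → ℝ)
    (hg : Differentiable ℝ g) (hgsc : StrongConvexOn Set.univ 1 g)
    (lam Δ : ℝ) (hlam : 0 < lam) (hΔ : 0 ≤ Δ)
    (x : Fin n → EuclideanSpace ℝ (Fin d)) (y : Fin n → ℝ) :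
    (∀ b : EuclideanSpace ℝ (Fin d),
        ∃! w : EuclideanSpace ℝ (Fin d), ∀ v, perturbedObj x y g lam Δ b w ≤
          perturbedObj x y g lam Δ b v) ∧
    (∀ (b wbar : EuclideanSpace ℝ (Fin d)),
        (∀ v, perturbedObj x y g lam Δ b wbar ≤ perturbedObj x y g lam Δ b v) ↔
          b = -((n * lam) • gradient g wbar) - (n * Δ) • wbar
              - ∑ i, (y i * deriv logisticLoss (y i * (inner ℝ wbar (x i) : ℝ))) • x i) ∧
    (∃ m : EuclideanSpace ℝ (Fin d) → EuclideanSpace ℝ (Fin d),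
        Function.Bijective m ∧
          ∀ b v, perturbedObj x y g lam Δ b (m b) ≤ perturbedObj x y g lam Δ b v) := by
  have hn' : (n : ℝ) ≠ 0 := Nat.cast_ne_zero.mpr (by omega)
  have hgrad := perturbedObj_hasGradientAt x y g lam Δ hn'
  have hsc := perturbedObj_strongConvexOn x y g lam Δ hlam.le hΔ hgsc
  have hunique b := (hsc b).existsUnique_forall_le hlam fun w => (hgrad b w (hg w)).differentiableAt
  have hmin_iff b w : (∀ v, perturbedObj x y g lam Δ b w ≤ perturbedObj x y g lam Δ b v) ↔
      b = minimizingNoise x y g lam Δ w := by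
    rw [((hsc b).convexOn fun _ => by positivity).forall_le_iff_of_hasGradientAt (hgrad b w (hg w)),
      smul_eq_zero_iff_right (inv_ne_zero hn'), sub_eq_zero]
  refine ⟨hunique, hmin_iff, ?_⟩
  choose m hm using fun b => (hunique b).exists
  refine ⟨m, Function.bijective_iff_has_inverse.mpr ⟨minimizingNoise x y g lam Δ, ?_, ?_⟩, hm⟩
  · exact fun b => ((hmin_iff b (m b)).mp (hm b)).symm
  · exact fun w => (hunique _).unique (hm _) ((hmin_iff _ w).mpr rfl)

/-- For the logistic loss and a differentiable 1-strongly convex regularizer `g`, the perturbed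
objective has a unique global minimizer for every noise vector `b`; `wbar` minimizes the objective
with noise `b` iff `b = −nλ∇g(wbar) − nΔ·wbar − Σᵢ yᵢ ℓ'(yᵢ⟨wbar,xᵢ⟩)·xᵢ`; and the map sending
the noise vector to the corresponding minimizer is a bijection of `ℝ^d`. -/
theorem perturbedObj_unique_min_and_bijective {d n : ℕ} (hn : 1 ≤ n)
    (g : EuclideanSpace ℝ (Fin d) → ℝ)
    (hg : Differentiable ℝ g) (hgsc : StrongConvexOn Set.univ 1 g)
    (lam Δ : ℝ) (hlam : 0 < lam) (hΔ : 0 ≤ Δ)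
    (x : Fin n → EuclideanSpace ℝ (Fin d)) (y : Fin n → ℝ)
    (hy : ∀ i, y i = 1 ∨ y i = -1) :
    (∀ b : EuclideanSpace ℝ (Fin d),
        ∃! w : EuclideanSpace ℝ (Fin d), ∀ v, perturbedObj x y g lam Δ b w ≤
          perturbedObj x y g lam Δ b v) ∧
    (∀ (b wbar : EuclideanSpace ℝ (Fin d)),
        (∀ v, perturbedObj x y g lam Δ b wbar ≤ perturbedObj x y g lam Δ b v) ↔
          b = -((n * lam) • gradient g wbar) - (n * Δ) • wbar
              - ∑ i, (y i * deriv logisticLoss (y i * (inner ℝ wbar (x i) : ℝ))) • x i) ∧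
    (∃ m : EuclideanSpace ℝ (Fin d) → EuclideanSpace ℝ (Fin d),
        Function.Bijective m ∧
          ∀ b v, perturbedObj x y g lam Δ b (m b) ≤ perturbedObj x y g lam Δ b v) :=
  perturbedObj_unique_min_and_bijective_general hn g hg hgsc lam Δ hlam hΔ x y
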